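/- arXiv:1309.3249 — 4 statements merged into one kernel-verified Lean document; each statement's English description precedes it below -/
import Mathlib

section
/- For all positive reals a and b, ∫₀^∞ w^{-1/2} exp(-(a/2)w - b/(2w)) dw = sqrt(2π/a) · exp(-sqrt(a·b)). -/
/-!
Substituting `w = t²` and completing the square,
`-(a/2) t² - b/(2t²) = -√(ab) - (α t - β/t)²` with `α = √(a/2)`, `β = √(b/2)`, turns the integral
into `2 e^{-√(ab)} ∫₀^∞ e^{-(α t - β/t)²} dt`. The Cauchy–Schlömilch substitution `u = α t - β/t`
maps `(0, ∞)` bijectively onto `ℝ` with `du = (α + β/t²) dt`, and the involution `t ↦ β/(α t)`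
turns the weight `β/t²` into `α` while leaving the even integrand unchanged; hence the last
integral is `(2α)⁻¹ ∫ e^{-u²} du = √π / (2α)`.
-/

open MeasureTheory Real Set

variable {E : Type*} [NormedAddCommGroup E] [NormedSpace ℝ E]

theorem integral_div_sq_smul_comp_div_Ioi (f : ℝ → E) {c : ℝ} (hc : 0 < c) :
    ∫ s in Ioi 0, (c / s ^ 2) • f (c / s) = ∫ s in Ioi 0, f s := by
  have hderiv : ∀ s ∈ Ioi (0 : ℝ), HasDerivWithinAt (fun s => c / s) (-(c / s ^ 2)) (Ioi 0) s :=
    fun s hs => (((hasDerivAt_const s c).fun_div (hasDerivAt_id' s) (ne_of_gt hs)).congr_deriv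
      (by ring)).hasDerivWithinAt
  have hinj : InjOn (fun s : ℝ => c / s) (Ioi 0) := fun x _ y _ h => by
    simpa [div_div_cancel₀ hc.ne'] using congrArg (c / ·) h
  have himage : (fun s : ℝ => c / s) '' Ioi 0 = Ioi 0 :=
    Subset.antisymm (image_subset_iff.2 fun s hs => div_pos hc hs) fun s hs =>
      ⟨c / s, div_pos hc hs, div_div_cancel₀ hc.ne'⟩
  have h := integral_image_eq_integral_abs_deriv_smul measurableSet_Ioi hderiv hinj f
  rw [himage] at h
  rw [h]
  refine setIntegral_congr_fun measurableSet_Ioi fun s hs => ?_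
  rw [abs_neg, abs_of_pos (div_pos hc (pow_pos hs 2))]

section CauchySchlomilch

variable {α β : ℝ}

theorem hasDerivAt_mul_sub_div (α β : ℝ) {s : ℝ} (hs : s ≠ 0) :
    HasDerivAt (fun s => α * s - β / s) (α + β / s ^ 2) s :=
  (((hasDerivAt_id' s).const_mul α).fun_sub
    ((hasDerivAt_const s β).fun_div (hasDerivAt_id' s) hs)).congr_deriv (by ring)

theorem strictMonoOn_mul_sub_div (hα : 0 < α) (hβ : 0 ≤ β) :
    StrictMonoOn (fun s => α * s - β / s) (Ioi 0) := fun x hx y _ hxy => by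
  have : β / y ≤ β / x := div_le_div_of_nonneg_left hβ hx hxy.le
  dsimp only
  nlinarith

theorem image_mul_sub_div_Ioi (hα : 0 < α) (hβ : 0 < β) :
    (fun s => α * s - β / s) '' Ioi 0 = univ := by
  refine eq_univ_of_forall fun y => ?_
  -- the positive root of `α s ^ 2 - y s - β`
  set r := √(y ^ 2 + 4 * α * β)
  have hr : r ^ 2 = y ^ 2 + 4 * α * β := sq_sqrt (by positivity)
  have hyr : 0 < y + r := by nlinarith [sqrt_nonneg (y ^ 2 + 4 * α * β)]
  refine ⟨(y + r) / (2 * α), div_pos hyr (by positivity), ?_⟩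
  field_simp
  nlinarith

theorem integral_add_div_sq_smul_comp_mul_sub_div_Ioi (g : ℝ → E) (hα : 0 < α) (hβ : 0 < β) :
    ∫ s in Ioi 0, (α + β / s ^ 2) • g (α * s - β / s) = ∫ u, g u := by
  have h := integral_image_eq_integral_abs_deriv_smul measurableSet_Ioi
    (fun s hs => (hasDerivAt_mul_sub_div α β (ne_of_gt hs)).hasDerivWithinAt)
    (strictMonoOn_mul_sub_div hα hβ.le).injOn g
  rw [image_mul_sub_div_Ioi hα hβ, setIntegral_univ] at h
  rw [h]
  refine setIntegral_congr_fun measurableSet_Ioi fun s hs => ?_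
  rw [abs_of_pos (by have : (0 : ℝ) < s := hs; positivity)]

theorem integrableOn_add_div_sq_smul_comp_mul_sub_div_Ioi {g : ℝ → E} (hg : Integrable g)
    (hα : 0 < α) (hβ : 0 < β) :
    IntegrableOn (fun s => (α + β / s ^ 2) • g (α * s - β / s)) (Ioi 0) := by
  have h := integrableOn_image_iff_integrableOn_abs_deriv_smul measurableSet_Ioi
    (fun s hs => (hasDerivAt_mul_sub_div α β (ne_of_gt hs)).hasDerivWithinAt)
    (strictMonoOn_mul_sub_div hα hβ.le).injOn g
  rw [image_mul_sub_div_Ioi hα hβ, integrableOn_univ] at h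
  refine (h.1 hg).congr_fun (fun s hs => ?_) measurableSet_Ioi
  dsimp only
  rw [abs_of_pos (by have : (0 : ℝ) < s := hs; positivity)]

theorem integrableOn_comp_mul_sub_div_Ioi {g : ℝ → E} (hg : Integrable g)
    (hα : 0 < α) (hβ : 0 < β) :
    IntegrableOn (fun s => g (α * s - β / s)) (Ioi 0) := by
  have hpos : ∀ s ∈ Ioi (0 : ℝ), 0 < α + β / s ^ 2 := fun s hs => by
    have : (0 : ℝ) < s := hs
    positivity
  have hbound : ∀ s ∈ Ioi (0 : ℝ), ‖(α + β / s ^ 2)⁻¹‖ ≤ α⁻¹ := fun s hs => by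
    rw [norm_inv, Real.norm_of_nonneg (hpos s hs).le]
    exact inv_anti₀ hα (le_add_of_nonneg_right (div_nonneg hβ.le (sq_nonneg s)))
  have hcont : ContinuousOn (fun s : ℝ => (α + β / s ^ 2)⁻¹) (Ioi 0) :=
    (continuousOn_const.add (continuousOn_const.div (continuous_pow 2).continuousOn
      fun s hs => pow_ne_zero 2 (ne_of_gt hs))).inv₀ fun s hs => (hpos s hs).ne'
  refine IntegrableOn.congr_fun (Integrable.bdd_smul
    (integrableOn_add_div_sq_smul_comp_mul_sub_div_Ioi hg hα hβ) α⁻¹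
    (hcont.aestronglyMeasurable measurableSet_Ioi)
    ((ae_restrict_iff' measurableSet_Ioi).2 (.of_forall hbound))) (fun s hs => ?_) measurableSet_Ioi
  exact inv_smul_smul₀ (hpos s hs).ne' _

theorem integral_comp_mul_sub_div_Ioi_of_even {g : ℝ → E} (hg : Integrable g)
    (heven : ∀ u, g (-u) = g u) (hα : 0 < α) (hβ : 0 < β) :
    ∫ s in Ioi 0, g (α * s - β / s) = (2 * α)⁻¹ • ∫ u, g u := by
  set I := ∫ s in Ioi 0, g (α * s - β / s)
  have hI := integrableOn_comp_mul_sub_div_Ioi hg hα hβ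
  have hsum := integrableOn_add_div_sq_smul_comp_mul_sub_div_Ioi hg hα hβ
  -- `s ↦ (β / α) / s` exchanges `α * s` and `β / s`, so it flips the sign of `α * s - β / s`
  have hreflect : ∫ s in Ioi 0, (β / s ^ 2) • g (α * s - β / s) = α • I := by
    rw [← integral_div_sq_smul_comp_div_Ioi _ (div_pos hβ hα), ← integral_smul]
    refine setIntegral_congr_fun measurableSet_Ioi fun s hs => ?_
    have hs : s ≠ 0 := ne_of_gt hs
    have harg : α * (β / α / s) - β / (β / α / s) = -(α * s - β / s) := by
      field_simp
      ring
    rw [harg, heven, smul_smul]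
    congr 1
    field_simp
  have hsplit : ∫ s in Ioi 0, (α + β / s ^ 2) • g (α * s - β / s) =
      α • I + ∫ s in Ioi 0, (β / s ^ 2) • g (α * s - β / s) := by
    have hαI : IntegrableOn (fun s => α • g (α * s - β / s)) (Ioi 0) := hI.smul α
    have hrest : IntegrableOn (fun s => (β / s ^ 2) • g (α * s - β / s)) (Ioi 0) :=
      (hsum.sub hαI).congr_fun
        (fun s _ => by simp only [Pi.sub_apply, add_smul, add_sub_cancel_left]) measurableSet_Ioi
    simp_rw [add_smul]
    rw [integral_add hαI hrest, integral_smul]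
  calc I = (2 * α)⁻¹ • ((2 * α) • I) := (inv_smul_smul₀ (by positivity) I).symm
    _ = (2 * α)⁻¹ • ∫ u, g u := by
      rw [← integral_add_div_sq_smul_comp_mul_sub_div_Ioi g hα hβ, hsplit, hreflect, two_mul,
        add_smul]

end CauchySchlomilch

theorem integral_exp_neg_sq_mul_sub_div_Ioi {α β : ℝ} (hα : 0 < α) (hβ : 0 < β) :
    ∫ s in Ioi 0, exp (-(α * s - β / s) ^ 2) = √π / (2 * α) := by
  have hgauss : ∫ u, exp (-u ^ 2) = √π := by simpa using integral_gaussian 1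
  rw [integral_comp_mul_sub_div_Ioi_of_even (g := fun u => exp (-u ^ 2))
    (by simpa using integrable_exp_neg_mul_sq one_pos) (fun u => by simp) hα hβ, hgauss,
    smul_eq_mul, inv_mul_eq_div]

theorem integral_gaussian_subordinator (a b : ℝ) (ha : 0 < a) (hb : 0 < b) :
    ∫ w in Set.Ioi (0 : ℝ), w ^ (-(1/2) : ℝ) * Real.exp (-(a/2) * w - b/(2*w))
      = Real.sqrt (2 * Real.pi / a) * Real.exp (-Real.sqrt (a * b)) := by
  obtain ⟨α, hα, rfl⟩ : ∃ α, 0 < α ∧ a = 2 * α ^ 2 :=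
    ⟨√(a / 2), by positivity, by rw [sq_sqrt (by positivity)]; ring⟩
  obtain ⟨β, hβ, rfl⟩ : ∃ β, 0 < β ∧ b = 2 * β ^ 2 :=
    ⟨√(b / 2), by positivity, by rw [sq_sqrt (by positivity)]; ring⟩
  have hsqrt_ab : √(2 * α ^ 2 * (2 * β ^ 2)) = 2 * (α * β) := by
    rw [show 2 * α ^ 2 * (2 * β ^ 2) = (2 * (α * β)) ^ 2 by ring, sqrt_sq (by positivity)]
  have hsqrt_pi : √(2 * π / (2 * α ^ 2)) = √π / α := by
    rw [show 2 * π / (2 * α ^ 2) = π / α ^ 2 by field_simp, sqrt_div' _ (sq_nonneg α),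
      sqrt_sq hα.le]
  have hsubst : ∀ t ∈ Ioi (0 : ℝ), (2 * t ^ ((2 : ℝ) - 1)) • ((t ^ (2 : ℝ)) ^ (-(1/2) : ℝ) *
      exp (-(2 * α ^ 2 / 2) * t ^ (2 : ℝ) - 2 * β ^ 2 / (2 * t ^ (2 : ℝ))))
      = 2 * exp (-(2 * (α * β))) * exp (-(α * t - β / t) ^ 2) := fun t ht => by
    have ht : 0 < t := ht
    have hpow : (t ^ (2 : ℝ)) ^ (-(1/2) : ℝ) = t⁻¹ := by
      rw [← rpow_mul ht.le]; norm_num [rpow_neg_one]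
    rw [hpow, show (2 : ℝ) - 1 = 1 by norm_num, rpow_one, rpow_two, smul_eq_mul,
      mul_assoc 2, mul_inv_cancel_left₀ ht.ne', mul_assoc 2, ← exp_add]
    congr 2
    field_simp
    ring
  calc _ = ∫ t in Ioi 0, (2 * t ^ ((2 : ℝ) - 1)) • ((t ^ (2 : ℝ)) ^ (-(1/2) : ℝ) *
        exp (-(2 * α ^ 2 / 2) * t ^ (2 : ℝ) - 2 * β ^ 2 / (2 * t ^ (2 : ℝ)))) :=
          (integral_comp_rpow_Ioi_of_pos two_pos).symm
    _ = ∫ t in Ioi 0, 2 * exp (-(2 * (α * β))) * exp (-(α * t - β / t) ^ 2) :=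
          setIntegral_congr_fun measurableSet_Ioi hsubst
    _ = _ := by
      rw [integral_const_mul, integral_exp_neg_sq_mul_sub_div_Ioi hα hβ, hsqrt_ab, hsqrt_pi]
      field_simp
end

section
/- For all positive reals t, a, b, the integral H(t,a,b) := ∫₀^t (t-s)^{-1/2} s^{-3/2} exp(-a/(2s)) exp(-b/(2(t-s))) ds equals sqrt(2π/(t·a)) · exp(-(sqrt(a)+sqrt(b))²/(2t)). -/
/-!
Substituting `w = 1/s - 1/t` turns the integral into
`t^(-1/2) e^(-(a+b)/(2t)) ∫₀^∞ w^(-1/2) e^(-(a/2) w - b/(2t²w)) dw`.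
After `w = u²` and a rescaling of `u`, what remains is a multiple of
`∫₀^∞ exp (-αβ (v - 1/v)²) dv`, which the Cauchy–Schlömilch substitution `x = v - 1/v` turns
into half a Gaussian integral: the Jacobian `1 + v⁻²` splits into two pieces exchanged by
`v ↦ 1/v`, under which the even integrand is invariant.
-/

open MeasureTheory Real Set

variable {E : Type*} [NormedAddCommGroup E] [NormedSpace ℝ E]

lemma strictMonoOn_sub_inv : StrictMonoOn (fun u : ℝ => u - u⁻¹) (Ioi 0) :=
  fun _ hx _ _ hxy => sub_lt_sub hxy (inv_strictAntiOn hx (mem_Ioi.1 hx |>.trans hxy) hxy)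

lemma image_sub_inv_Ioi : (fun u : ℝ => u - u⁻¹) '' Ioi 0 = univ := by
  refine eq_univ_of_forall fun v => ?_
  have hr : √(v ^ 2 + 4) ^ 2 = v ^ 2 + 4 := sq_sqrt (by positivity)
  have hvr : 0 < v + √(v ^ 2 + 4) := by nlinarith [sqrt_nonneg (v ^ 2 + 4)]
  refine ⟨(v + √(v ^ 2 + 4)) / 2, half_pos hvr, ?_⟩
  field_simp
  nlinarith

lemma hasDerivAt_sub_inv {u : ℝ} (hu : u ≠ 0) :
    HasDerivAt (fun u : ℝ => u - u⁻¹) (1 + (u ^ 2)⁻¹) u :=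
  ((hasDerivAt_id u).sub (hasDerivAt_inv hu)).congr_deriv (sub_neg_eq_add _ _)

lemma integral_Ioi_one_add_inv_sq_smul_comp_sub_inv (f : ℝ → E) :
    ∫ u in Ioi 0, (1 + (u ^ 2)⁻¹) • f (u - u⁻¹) = ∫ x, f x := by
  have := integral_image_eq_integral_abs_deriv_smul measurableSet_Ioi
    (fun u hu => (hasDerivAt_sub_inv (ne_of_gt hu)).hasDerivWithinAt)
    strictMonoOn_sub_inv.injOn f
  rw [image_sub_inv_Ioi, setIntegral_univ] at this
  rw [this]
  congr 1 with u
  rw [abs_of_pos (by positivity)]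

lemma integrableOn_Ioi_one_add_inv_sq_smul_comp_sub_inv {f : ℝ → E} (hf : Integrable f) :
    IntegrableOn (fun u => (1 + (u ^ 2)⁻¹) • f (u - u⁻¹)) (Ioi 0) := by
  have := (integrableOn_image_iff_integrableOn_abs_deriv_smul measurableSet_Ioi
    (fun u hu => (hasDerivAt_sub_inv (ne_of_gt hu)).hasDerivWithinAt)
    strictMonoOn_sub_inv.injOn f).1 (by rwa [image_sub_inv_Ioi, integrableOn_univ])
  refine this.congr_fun (fun u _ => ?_) measurableSet_Ioi
  dsimp only
  rw [abs_of_pos (by positivity)]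

lemma integrableOn_Ioi_comp_sub_inv {f : ℝ → E} (hf : Integrable f) :
    IntegrableOn (fun u => f (u - u⁻¹)) (Ioi 0) := by
  have : IntegrableOn (fun u : ℝ => (1 + (u ^ 2)⁻¹)⁻¹ • (1 + (u ^ 2)⁻¹) • f (u - u⁻¹)) (Ioi 0) :=
    (integrableOn_Ioi_one_add_inv_sq_smul_comp_sub_inv hf).bdd_smul 1 (by fun_prop)
      (ae_of_all _ fun u => ?_)
  · exact this.congr_fun (fun u _ => inv_smul_smul₀ (by positivity) _) measurableSet_Ioi
  · rw [norm_inv, Real.norm_of_nonneg (by positivity)]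
    exact inv_le_one_of_one_le₀ (le_add_of_nonneg_right (by positivity))

lemma integral_Ioi_inv_sq_smul_comp_inv (g : ℝ → E) :
    ∫ u in Ioi 0, (u ^ 2)⁻¹ • g u⁻¹ = ∫ u in Ioi 0, g u := by
  rw [← integral_comp_rpow_Ioi g (neg_ne_zero.2 one_ne_zero)]
  refine setIntegral_congr_fun measurableSet_Ioi fun u (hu : 0 < u) => ?_
  norm_num [rpow_neg_one, rpow_neg hu.le]

theorem integral_Ioi_comp_sub_inv {f : ℝ → E} (hf : Integrable f) (heven : Function.Even f) :
    ∫ u in Ioi 0, f (u - u⁻¹) = (2 : ℝ)⁻¹ • ∫ x, f x := by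
  have hinv : ∫ u in Ioi 0, (u ^ 2)⁻¹ • f (u - u⁻¹) = ∫ u in Ioi 0, f (u - u⁻¹) := by
    rw [← integral_Ioi_inv_sq_smul_comp_inv (fun u => f (u - u⁻¹))]
    refine setIntegral_congr_fun measurableSet_Ioi fun u _ => ?_
    rw [inv_inv, ← heven, neg_sub]
  have hsplit : ∫ u in Ioi 0, (u ^ 2)⁻¹ • f (u - u⁻¹)
      = (∫ x, f x) - ∫ u in Ioi 0, f (u - u⁻¹) := by
    rw [← integral_Ioi_one_add_inv_sq_smul_comp_sub_inv,
      ← integral_sub (integrableOn_Ioi_one_add_inv_sq_smul_comp_sub_inv hf)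
        (integrableOn_Ioi_comp_sub_inv hf)]
    simp only [add_smul, one_smul, add_sub_cancel_left]
  rw [eq_inv_smul_iff₀ two_ne_zero, two_smul]
  exact eq_sub_iff_add_eq.1 (hinv ▸ hsplit)

theorem integral_Ioi_exp_neg_sq_add_div_sq {α β : ℝ} (hα : 0 < α) (hβ : 0 < β) :
    ∫ u in Ioi 0, exp (-(α ^ 2 * u ^ 2 + β ^ 2 / u ^ 2)) = √π / (2 * α) * exp (-(2 * α * β)) := by
  have hc : 0 < √(β / α) := sqrt_pos.2 (div_pos hβ hα)
  have hscale : ∀ v : ℝ, v ≠ 0 → exp (-(α ^ 2 * (√(β / α) * v) ^ 2 + β ^ 2 / (√(β / α) * v) ^ 2))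
      = exp (-(2 * α * β)) * exp (-(α * β) * (v - v⁻¹) ^ 2) := by
    intro v hv
    rw [← exp_add, mul_pow, sq_sqrt (div_pos hβ hα).le]
    congr 1
    field_simp
    ring
  have hgauss : ∫ v in Ioi 0, exp (-(α * β) * (v - v⁻¹) ^ 2) = 2⁻¹ * √(π / (α * β)) := by
    rw [integral_Ioi_comp_sub_inv (f := fun x => exp (-(α * β) * x ^ 2))
      (integrable_exp_neg_mul_sq (by positivity)) (fun x => by simp only [neg_sq]),
      integral_gaussian, smul_eq_mul]
  have hconst : √(β / α) * √(π / (α * β)) = √π / α := by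
    rw [← sqrt_mul (div_pos hβ hα).le, show β / α * (π / (α * β)) = π / α ^ 2 by field_simp,
      sqrt_div pi_pos.le, sqrt_sq hα.le]
  have hsub := integral_comp_mul_left_Ioi' (fun u => exp (-(α ^ 2 * u ^ 2 + β ^ 2 / u ^ 2))) 0 hc
  rw [mul_zero] at hsub
  rw [← hsub, setIntegral_congr_fun measurableSet_Ioi fun v (hv : 0 < v) => hscale v hv.ne',
    integral_const_mul, hgauss, smul_eq_mul]
  linear_combination (2⁻¹ * exp (-(2 * α * β))) * hconst

theorem integral_Ioi_rpow_neg_half_mul_exp_neg_mul_add_div {p q : ℝ} (hp : 0 < p) (hq : 0 < q) :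
    ∫ w in Ioi 0, w ^ (-(1 / 2) : ℝ) * exp (-(p * w + q / w))
      = √(π / p) * exp (-(2 * √(p * q))) := by
  have hsq : ∀ u : ℝ, 0 < u → (2 * u ^ ((2 : ℝ) - 1)) •
      ((u ^ (2 : ℝ)) ^ (-(1 / 2) : ℝ) * exp (-(p * u ^ (2 : ℝ) + q / u ^ (2 : ℝ))))
      = 2 * exp (-(√p ^ 2 * u ^ 2 + √q ^ 2 / u ^ 2)) := by
    intro u hu
    rw [rpow_two, rpow_neg (sq_nonneg u), ← sqrt_eq_rpow, sqrt_sq hu.le, sq_sqrt hp.le,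
      sq_sqrt hq.le, smul_eq_mul]
    norm_num
    field_simp
  rw [← integral_comp_rpow_Ioi_of_pos two_pos,
    setIntegral_congr_fun measurableSet_Ioi fun u (hu : 0 < u) => hsq u hu,
    integral_const_mul, integral_Ioi_exp_neg_sq_add_div_sq (sqrt_pos.2 hp) (sqrt_pos.2 hq),
    sqrt_div' _ hp.le, sqrt_mul hp.le, ← mul_assoc 2 √p]
  ring

lemma image_inv_sub_inv_Ioo {t : ℝ} (ht : 0 < t) :
    (fun s : ℝ => s⁻¹ - t⁻¹) '' Ioo 0 t = Ioi 0 := by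
  rw [show (fun s : ℝ => s⁻¹ - t⁻¹) = (· - t⁻¹) ∘ Inv.inv from rfl, image_comp,
    image_inv_eq_inv, inv_Ioo_0_left ht]
  simp

lemma integral_Ioo_inv_sq_smul_comp_inv_sub_inv {t : ℝ} (ht : 0 < t) (g : ℝ → E) :
    ∫ s in Ioo 0 t, (s ^ 2)⁻¹ • g (s⁻¹ - t⁻¹) = ∫ w in Ioi 0, g w := by
  have := integral_image_eq_integral_abs_deriv_smul measurableSet_Ioo
    (fun s hs => ((hasDerivAt_inv (ne_of_gt hs.1)).sub_const t⁻¹).hasDerivWithinAt)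
    ((sub_left_injective.comp inv_injective).injOn (s := Ioo 0 t)) g
  rw [image_inv_sub_inv_Ioo ht] at this
  rw [this]
  refine setIntegral_congr_fun measurableSet_Ioo fun s hs => ?_
  rw [abs_neg, abs_of_pos (inv_pos.2 (pow_pos hs.1 2))]

lemma rpow_neg_half_mul_rpow_neg_three_halves {s t : ℝ} (hs : 0 < s) (hst : s < t) :
    (t - s) ^ (-(1 / 2) : ℝ) * s ^ (-(3 / 2) : ℝ)
      = t ^ (-(1 / 2) : ℝ) * ((s ^ 2)⁻¹ * (s⁻¹ - t⁻¹) ^ (-(1 / 2) : ℝ)) := by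
  have ht : 0 < t := hs.trans hst
  have hw : s⁻¹ - t⁻¹ = (t - s) * (t * s)⁻¹ := by field_simp
  have htt : t ^ (-(1 / 2) : ℝ) * t ^ (1 / 2 : ℝ) = 1 := by
    rw [← rpow_add ht]; norm_num
  have hss : s ^ (1 / 2 : ℝ) = s ^ (-(3 / 2) : ℝ) * s ^ 2 := by
    rw [← rpow_natCast, ← rpow_add hs]; norm_num
  rw [hw, mul_rpow (sub_pos.2 hst).le (by positivity), inv_rpow (by positivity),
    ← rpow_neg (by positivity), neg_neg, mul_rpow ht.le hs.le, hss]
  calc (t - s) ^ (-(1 / 2) : ℝ) * s ^ (-(3 / 2) : ℝ)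
      = (t ^ (-(1 / 2) : ℝ) * t ^ (1 / 2 : ℝ)) * ((s ^ 2)⁻¹ * s ^ 2) *
          ((t - s) ^ (-(1 / 2) : ℝ) * s ^ (-(3 / 2) : ℝ)) := by
        rw [htt, inv_mul_cancel₀ (by positivity)]; ring
    _ = _ := by ring

lemma neg_div_two_mul_add_neg_div_two_mul_sub {s t : ℝ} (a b : ℝ) (hs : 0 < s) (hst : s < t) :
    -a / (2 * s) + -b / (2 * (t - s))
      = -((a + b) / (2 * t)) + -(a / 2 * (s⁻¹ - t⁻¹) + b / (2 * t ^ 2) / (s⁻¹ - t⁻¹)) := by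
  have ht : 0 < t := hs.trans hst
  have hts : t - s ≠ 0 := (sub_pos.2 hst).ne'
  have hw : s⁻¹ - t⁻¹ = (t - s) / (t * s) := by field_simp
  rw [hw]
  field_simp
  ring

theorem H_formula (t a b : ℝ) (ht : 0 < t) (ha : 0 < a) (hb : 0 < b) :
    ∫ s in (0:ℝ)..t, (t - s) ^ (-(1/2) : ℝ) * s ^ (-(3/2) : ℝ) *
        Real.exp (-a/(2*s)) * Real.exp (-b/(2*(t-s)))
      = Real.sqrt (2 * Real.pi / (t * a)) *
        Real.exp (-(Real.sqrt a + Real.sqrt b)^2 / (2*t)) := by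
  have hpt : ∀ s ∈ Ioo 0 t, (t - s) ^ (-(1/2) : ℝ) * s ^ (-(3/2) : ℝ) *
      exp (-a/(2*s)) * exp (-b/(2*(t-s))) = t ^ (-(1 / 2) : ℝ) * exp (-((a + b) / (2 * t))) *
        ((s ^ 2)⁻¹ • ((s⁻¹ - t⁻¹) ^ (-(1 / 2) : ℝ) *
          exp (-(a / 2 * (s⁻¹ - t⁻¹) + b / (2 * t ^ 2) / (s⁻¹ - t⁻¹))))) := by
    rintro s ⟨hs, hst⟩
    rw [mul_assoc _ (exp _), ← exp_add, neg_div_two_mul_add_neg_div_two_mul_sub a b hs hst,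
      exp_add, rpow_neg_half_mul_rpow_neg_three_halves hs hst, smul_eq_mul]
    ring
  have hpre : t ^ (-(1 / 2) : ℝ) * √(π / (a / 2)) = √(2 * π / (t * a)) := by
    rw [rpow_neg ht.le, ← sqrt_eq_rpow, ← sqrt_inv, ← sqrt_mul (by positivity)]
    congr 1
    field_simp
  have hexp : exp (-((a + b) / (2 * t))) * exp (-(2 * √(a / 2 * (b / (2 * t ^ 2)))))
      = exp (-(√a + √b) ^ 2 / (2 * t)) := by
    have hpq : a / 2 * (b / (2 * t ^ 2)) = (√a * √b / (2 * t)) ^ 2 := by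
      rw [div_pow, mul_pow, sq_sqrt ha.le, sq_sqrt hb.le]
      field_simp
    rw [← exp_add, hpq, sqrt_sq (by positivity), add_sq, sq_sqrt ha.le, sq_sqrt hb.le]
    congr 1
    ring
  rw [intervalIntegral.integral_of_le ht.le, integral_Ioc_eq_integral_Ioo,
    setIntegral_congr_fun measurableSet_Ioo hpt, integral_const_mul,
    integral_Ioo_inv_sq_smul_comp_inv_sub_inv ht
      (fun w => w ^ (-(1 / 2) : ℝ) * exp (-(a / 2 * w + b / (2 * t ^ 2) / w))),
    integral_Ioi_rpow_neg_half_mul_exp_neg_mul_add_div (by positivity) (by positivity),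
    ← hpre, ← hexp]
  ring
end

section
/- Let I_μ be the modified Bessel function of the first kind with μ > -1/2. Then for all 0 < x ≤ y, I_μ(y)/I_μ(x) ≤ (y/x)^μ · e^{y-x}. -/
noncomputable def besselI (μ z : ℝ) : ℝ :=
  ∑' k : ℕ, (z / 2) ^ (μ + 2 * (k : ℝ)) / ((Nat.factorial k : ℝ) * Real.Gamma ((k : ℝ) + μ + 1))

/-!
Write `I_μ(z) = (z/2)^μ f(z)` with `f(z) = ∑ c_k z^(2k)/(2k)!`. For `μ ≥ -1/2` the coefficients
`c_k` are nonnegative and decreasing, and for any such coefficients `f' ≤ f` on `ℝ`: summation by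
parts writes `f - f'` as a nonnegative combination of the partial sums of
`∑ (z^(2k)/(2k)! - z^(2k-1)/(2k-1)!)`, which are the even-degree Taylor polynomials of `e^(-z)` and
hence positive. So `e^(-z) f(z)` is decreasing, i.e. `f(y) ≤ e^(y-x) f(x)`, which is the bound.
-/

open Real Finset
open scoped Nat

lemma Finset.sum_range_mul_nonneg_of_antitone {R : Type*} [CommRing R] [PartialOrder R]
    [IsOrderedRing R] {a u : ℕ → R} (ha : Antitone a) (ha₀ : ∀ k, 0 ≤ a k)
    (hu : ∀ n, 0 ≤ ∑ i ∈ range n, u i) (N : ℕ) : 0 ≤ ∑ i ∈ range N, a i * u i := by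
  have h := sum_range_by_parts a u N
  simp only [smul_eq_mul] at h
  rw [h, sub_nonneg]
  refine (sum_nonpos fun i _ ↦ ?_).trans (mul_nonneg (ha₀ _) (hu N))
  exact mul_nonpos_of_nonpos_of_nonneg (sub_nonpos.2 (ha i.le_succ)) (hu _)

lemma hasDerivAt_sum_range_pow_div_factorial (n : ℕ) (x : ℝ) :
    HasDerivAt (fun x ↦ ∑ i ∈ range (n + 1), x ^ i / (i ! : ℝ))
      (∑ i ∈ range n, x ^ i / (i ! : ℝ)) x := by
  induction n with
  | zero => simpa using hasDerivAt_const x (1 : ℝ)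
  | succ n ih =>
    simp_rw [sum_range_succ _ (n + 1)]
    refine (ih.fun_add ((hasDerivAt_pow (n + 1) x).div_const ((n + 1)! : ℝ))).congr_deriv ?_
    rw [sum_range_succ _ n, Nat.factorial_succ]
    push_cast
    field_simp

lemma sum_range_two_mul_add_one_pow_div_factorial_pos (m : ℕ) (x : ℝ) :
    0 < ∑ i ∈ range (2 * m + 1), x ^ i / (i ! : ℝ) := by
  rcases le_total 0 x with hx | hx
  · rw [sum_range_succ']
    exact add_pos_of_nonneg_of_pos (sum_nonneg fun i _ ↦ by positivity) (by simp)
  set E := fun x : ℝ ↦ ∑ i ∈ range (2 * m + 1), x ^ i / (i ! : ℝ)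
  have hderiv (x : ℝ) : HasDerivAt (fun x ↦ exp (-x) * E x)
      (-(exp (-x) * (x ^ (2 * m) / ((2 * m)! : ℝ)))) x := by
    refine ((hasDerivAt_neg x).exp.mul
      (hasDerivAt_sum_range_pow_div_factorial _ x)).congr_deriv ?_
    simp only [sum_range_succ _ (2 * m)]
    ring
  have hanti : Antitone (fun x ↦ exp (-x) * E x) :=
    antitone_of_hasDerivAt_nonpos hderiv fun x ↦ by
      have : 0 ≤ x ^ (2 * m) := by rw [pow_mul]; positivity
      simp only [Pi.zero_apply, neg_nonpos]; positivity
  have hE₀ : E 0 = 1 := by simp [E, sum_range_succ']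
  have h := hanti hx
  simp only [neg_zero, exp_zero, one_mul, hE₀] at h
  exact pos_of_mul_pos_right (one_pos.trans_le h) (exp_pos _).le

lemma sum_range_succ_sub_deriv_pow_two_mul_div_factorial (n : ℕ) (z : ℝ) :
    ∑ k ∈ range (n + 1),
        (z ^ (2 * k) / ((2 * k)! : ℝ) - ↑(2 * k) * z ^ (2 * k - 1) / ((2 * k)! : ℝ)) =
      ∑ i ∈ range (2 * n + 1), (-z) ^ i / (i ! : ℝ) := by
  induction n with
  | zero => simp
  | succ n ih =>
    have h : 2 * (n + 1) = 2 * n + 1 + 1 := by ring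
    rw [sum_range_succ, ih, h, sum_range_succ _ (2 * n + 1 + 1), sum_range_succ _ (2 * n + 1),
      Nat.add_sub_cancel, Nat.factorial_succ (2 * n + 1), Odd.neg_pow ⟨n, rfl⟩,
      Even.neg_pow ⟨n + 1, by ring⟩]
    push_cast
    field_simp
    ring

lemma sum_range_sub_deriv_pow_two_mul_div_factorial_nonneg (z : ℝ) (n : ℕ) :
    0 ≤ ∑ k ∈ range n,
      (z ^ (2 * k) / ((2 * k)! : ℝ) - ↑(2 * k) * z ^ (2 * k - 1) / ((2 * k)! : ℝ)) := by
  rcases n with _ | n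
  · simp
  · rw [sum_range_succ_sub_deriv_pow_two_mul_div_factorial]
    exact (sum_range_two_mul_add_one_pow_div_factorial_pos n _).le

lemma hasDerivAt_sum_mul_pow_two_mul_div_factorial (a : ℕ → ℝ) (N : ℕ) (z : ℝ) :
    HasDerivAt (fun z ↦ ∑ k ∈ range N, a k * (z ^ (2 * k) / ((2 * k)! : ℝ)))
      (∑ k ∈ range N, a k * (↑(2 * k) * z ^ (2 * k - 1) / ((2 * k)! : ℝ))) z :=
  HasDerivAt.fun_sum fun k _ ↦ ((hasDerivAt_pow (2 * k) z).div_const _).const_mul (a k)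

lemma antitone_exp_neg_mul_sum_mul_pow_two_mul_div_factorial {a : ℕ → ℝ} (ha : Antitone a)
    (ha₀ : ∀ k, 0 ≤ a k) (N : ℕ) :
    Antitone (fun z ↦ exp (-z) * ∑ k ∈ range N, a k * (z ^ (2 * k) / ((2 * k)! : ℝ))) := by
  refine antitone_of_hasDerivAt_nonpos
    (fun z ↦ (hasDerivAt_neg z).exp.mul (hasDerivAt_sum_mul_pow_two_mul_div_factorial a N z))
    fun z ↦ ?_
  have h := sum_range_mul_nonneg_of_antitone ha ha₀
    (sum_range_sub_deriv_pow_two_mul_div_factorial_nonneg z) N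
  simp only [mul_sub, sum_sub_distrib, sub_nonneg] at h
  have := mul_nonneg (exp_pos (-z)).le (sub_nonneg.2 h)
  rw [Pi.zero_apply]
  linarith

lemma summable_mul_pow_two_mul_div_factorial {a : ℕ → ℝ} (ha : Antitone a)
    (ha₀ : ∀ k, 0 ≤ a k) (z : ℝ) : Summable (fun k ↦ a k * (z ^ (2 * k) / ((2 * k)! : ℝ))) := by
  have hterm (k : ℕ) : 0 ≤ z ^ (2 * k) / ((2 * k)! : ℝ) := by
    rw [pow_mul]; positivity
  exact ((hasSum_cosh z).summable.mul_left (a 0)).of_nonneg_of_le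
    (fun k ↦ mul_nonneg (ha₀ k) (hterm k))
    (fun k ↦ mul_le_mul_of_nonneg_right (ha k.zero_le) (hterm k))

lemma antitone_exp_neg_mul_tsum_mul_pow_two_mul_div_factorial {a : ℕ → ℝ} (ha : Antitone a)
    (ha₀ : ∀ k, 0 ≤ a k) :
    Antitone (fun z ↦ exp (-z) * ∑' k, a k * (z ^ (2 * k) / ((2 * k)! : ℝ))) := by
  intro x y hxy
  have hlim (z : ℝ) :=
    (summable_mul_pow_two_mul_div_factorial ha ha₀ z).hasSum.tendsto_sum_nat.const_mul (exp (-z))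
  exact le_of_tendsto_of_tendsto' (hlim y) (hlim x)
    fun N ↦ antitone_exp_neg_mul_sum_mul_pow_two_mul_div_factorial ha ha₀ N hxy

/-- Since `(2k)! / (4^k k!) = Γ(k + 1/2) / √π`, this is `Γ(k + 1/2) / (√π Γ(k + μ + 1))`. -/
noncomputable def besselICoeff (μ : ℝ) (k : ℕ) : ℝ :=
  (2 * k)! / (4 ^ k * k ! * Gamma (k + μ + 1))

lemma besselI_eq_rpow_mul_tsum (μ : ℝ) {z : ℝ} (hz : 0 < z) :
    besselI μ z = (z / 2) ^ μ * ∑' k, besselICoeff μ k * (z ^ (2 * k) / ((2 * k)! : ℝ)) := by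
  rw [besselI, ← tsum_mul_left]
  congr 1 with k
  have hpow : (z / 2) ^ (2 * k) = z ^ (2 * k) / 4 ^ k := by
    rw [div_pow, pow_mul 2, show (2 : ℝ) ^ 2 = 4 by norm_num]
  rw [rpow_add (half_pos hz), show 2 * (k : ℝ) = (2 * k : ℕ) by push_cast; ring, rpow_natCast,
    hpow, besselICoeff]
  field_simp

lemma besselICoeff_nonneg {μ : ℝ} (hμ : -1 < μ) (k : ℕ) : 0 ≤ besselICoeff μ k := by
  have := Gamma_pos_of_pos (show 0 < (k : ℝ) + μ + 1 by linarith [k.cast_nonneg (α := ℝ)])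
  unfold besselICoeff
  positivity

lemma besselICoeff_succ {μ : ℝ} (hμ : -1 < μ) (k : ℕ) :
    besselICoeff μ (k + 1) = (2 * k + 1) / (2 * (k + μ + 1)) * besselICoeff μ k := by
  have hk : (k : ℝ) + μ + 1 ≠ 0 := by linarith [k.cast_nonneg (α := ℝ)]
  have hΓ : Gamma (↑(k + 1) + μ + 1) = (k + μ + 1) * Gamma (k + μ + 1) := by
    rw [← Gamma_add_one hk]; push_cast; ring_nf
  rw [besselICoeff, besselICoeff, hΓ, show 2 * (k + 1) = 2 * k + 1 + 1 by ring,
    Nat.factorial_succ, Nat.factorial_succ, Nat.factorial_succ]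
  push_cast
  field_simp
  ring

lemma besselICoeff_antitone {μ : ℝ} (hμ : -(1 / 2) ≤ μ) : Antitone (besselICoeff μ) := by
  refine antitone_nat_of_succ_le fun k ↦ ?_
  rw [besselICoeff_succ (by linarith)]
  refine mul_le_of_le_one_left (besselICoeff_nonneg (by linarith) k) ?_
  rw [div_le_one (by linarith [k.cast_nonneg (α := ℝ)])]
  linarith

theorem besselI_ratio_upper (μ : ℝ) (hμ : -(1/2) < μ) (x y : ℝ) (hx : 0 < x) (hxy : x ≤ y) :
    besselI μ y / besselI μ x ≤ (y / x) ^ μ * Real.exp (y - x) := by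
  have hy : 0 < y := hx.trans_le hxy
  have ha := besselICoeff_antitone hμ.le
  have ha₀ := besselICoeff_nonneg (show -1 < μ by linarith)
  set f := fun z : ℝ ↦ ∑' k, besselICoeff μ k * (z ^ (2 * k) / ((2 * k)! : ℝ))
  have hf : f y ≤ exp (y - x) * f x := by
    have h := antitone_exp_neg_mul_tsum_mul_pow_two_mul_div_factorial ha ha₀ hxy
    calc f y = exp y * (exp (-y) * f y) := by
          rw [← mul_assoc, ← exp_add, add_neg_cancel, exp_zero, one_mul]
      _ ≤ exp y * (exp (-x) * f x) := by gcongr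
      _ = exp (y - x) * f x := by rw [← mul_assoc, ← exp_add, sub_eq_add_neg]
  rw [besselI_eq_rpow_mul_tsum μ hx, besselI_eq_rpow_mul_tsum μ hy]
  refine div_le_of_le_mul₀ (mul_nonneg (by positivity) (tsum_nonneg fun k ↦ ?_))
    (by positivity) ?_
  · exact mul_nonneg (ha₀ k) (by rw [pow_mul]; positivity)
  calc (y / 2) ^ μ * f y ≤ (y / 2) ^ μ * (exp (y - x) * f x) := by gcongr
    _ = (y / x) ^ μ * (x / 2) ^ μ * (exp (y - x) * f x) := by
      rw [← mul_rpow (by positivity) (by positivity), div_mul_div_cancel₀ hx.ne']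
    _ = (y / x) ^ μ * exp (y - x) * ((x / 2) ^ μ * f x) := by ring
end

section
/- Let I_μ be the modified Bessel function of the first kind with μ ≥ 1/2. Then for all 0 < x ≤ y, I_μ(y)/I_μ(x) ≥ (x/y)^μ · e^{y-x}. In particular, for μ ≥ 1/2 and z ≥ 1, I_μ(z) ≥ I_μ(1) · z^{-μ} · e^{z-1}. -/
/-!
With `p = μ - 1/2`, Poisson's integral
`I_μ(z) = (z/2)^μ / (m₀ Γ(μ+1)) ∫_{-1}^1 e^{zs} (1-s²)^p ds`
with `m₀ = ∫_{-1}^1 (1-s²)^p ds` follows by expanding `e^{zs}` termwise: odd moments of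
`(1-s²)^p` vanish and the even ones satisfy a two-term recurrence (integration by parts)
matching that of `1 / (4^k k! Γ(k+μ+1))`.
The substitution `u = z(1-s)` turns it into
`z^μ e^{-z} I_μ(z) = c ∫_0^{2z} e^{-u} (u(2z-u))^p du`,
and for `p ≥ 0` both the integrand and the range of integration grow with `z`. So
`z ↦ z^μ e^{-z} I_μ(z)` is nondecreasing on `(0, ∞)`, which is the inequality.
-/

open intervalIntegral Set Real Nat

lemma continuous_one_sub_sq_rpow {p : ℝ} (hp : 0 ≤ p) :
    Continuous fun s : ℝ => (1 - s ^ 2) ^ p :=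
  (continuous_const.sub (continuous_pow 2)).rpow_const fun _ => Or.inr hp

lemma one_sub_sq_nonneg_of_mem_uIcc {s : ℝ} (hs : s ∈ uIcc (-1 : ℝ) 1) : 0 ≤ 1 - s ^ 2 := by
  rw [uIcc_of_le (by norm_num)] at hs
  nlinarith [hs.1, hs.2]

noncomputable def besselMoment (p : ℝ) (k : ℕ) : ℝ :=
  ∫ s in (-1 : ℝ)..1, s ^ (2 * k) * (1 - s ^ 2) ^ p

lemma besselMoment_succ {p : ℝ} (hp : 0 ≤ p) (k : ℕ) :
    (2 * k + 2 * p + 3) * besselMoment p (k + 1) = (2 * k + 1) * besselMoment p k := by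
  have hderiv : ∀ s ∈ uIcc (-1 : ℝ) 1,
      HasDerivAt (fun s => s ^ (2 * k + 1) * (1 - s ^ 2) ^ (p + 1))
        ((2 * k + 1) * (s ^ (2 * k) * (1 - s ^ 2) ^ p)
          - (2 * k + 2 * p + 3) * (s ^ (2 * (k + 1)) * (1 - s ^ 2) ^ p)) s := by
    intro s hs
    have hw := one_sub_sq_nonneg_of_mem_uIcc hs
    refine ((hasDerivAt_pow (2 * k + 1) s).mul (((hasDerivAt_pow 2 s).const_sub 1).rpow_const
      (Or.inr (by linarith : 1 ≤ p + 1)))).congr_deriv ?_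
    rw [add_sub_cancel_right, rpow_add' hw (by positivity), rpow_one]
    push_cast
    ring
  have hcont : Continuous fun s : ℝ => s ^ (2 * k) * (1 - s ^ 2) ^ p :=
    (continuous_pow _).mul (continuous_one_sub_sq_rpow hp)
  have hcont' : Continuous fun s : ℝ => s ^ (2 * (k + 1)) * (1 - s ^ 2) ^ p :=
    (continuous_pow _).mul (continuous_one_sub_sq_rpow hp)
  have hftc := integral_eq_sub_of_hasDerivAt hderiv
    (((hcont.const_mul _).sub (hcont'.const_mul _)).intervalIntegrable _ _)
  rw [integral_sub ((hcont.const_mul _).intervalIntegrable _ _)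
    ((hcont'.const_mul _).intervalIntegrable _ _), integral_const_mul, integral_const_mul] at hftc
  norm_num [zero_rpow (by positivity : p + 1 ≠ 0)] at hftc
  rw [besselMoment, besselMoment]
  linarith

lemma besselMoment_mul_eq {p : ℝ} (hp : 0 ≤ p) (k : ℕ) :
    besselMoment p k * (4 ^ k * k ! * Gamma (k + p + 3 / 2))
      = besselMoment p 0 * Gamma (p + 3 / 2) * (2 * k)! := by
  induction k with
  | zero => simp
  | succ k ih =>
    have hΓ : Gamma ((k + 1 : ℕ) + p + 3 / 2) = (k + p + 3 / 2) * Gamma (k + p + 3 / 2) := by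
      rw [← Gamma_add_one (by positivity)]
      push_cast
      ring_nf
    rw [hΓ, show 2 * (k + 1) = 2 * k + 1 + 1 by ring, factorial_succ, factorial_succ,
      factorial_succ]
    push_cast
    linear_combination (2 * (k + 1) * 4 ^ k * k ! * Gamma (k + p + 3 / 2)) * besselMoment_succ hp k
      + (2 * k + 2) * (2 * k + 1) * ih

lemma integral_odd_pow_mul_one_sub_sq_rpow (p : ℝ) {n : ℕ} (hn : Odd n) :
    ∫ s in (-1 : ℝ)..1, s ^ n * (1 - s ^ 2) ^ p = 0 := by
  have h := integral_comp_neg (a := -1) (b := 1) fun s : ℝ => s ^ n * (1 - s ^ 2) ^ p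
  simp only [hn.neg_pow, neg_sq, neg_mul, integral_neg, neg_neg] at h
  linarith

noncomputable def poissonIntegral (p z : ℝ) : ℝ :=
  ∫ s in (-1 : ℝ)..1, exp (z * s) * (1 - s ^ 2) ^ p

lemma hasSum_poissonIntegral {p : ℝ} (hp : 0 ≤ p) (z : ℝ) :
    HasSum (fun k => z ^ (2 * k) / (2 * k)! * besselMoment p k) (poissonIntegral p z) := by
  have hcont : Continuous fun s : ℝ => (1 - s ^ 2) ^ p := continuous_one_sub_sq_rpow hp
  have hexp : HasSum (fun n => ∫ s in (-1 : ℝ)..1, (z * s) ^ n / n ! * (1 - s ^ 2) ^ p)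
      (poissonIntegral p z) := by
    refine hasSum_integral_of_dominated_convergence (fun n _ => |z| ^ n / n !)
      (fun n => (((continuous_const.mul continuous_id).pow n).div_const _ |>.mul hcont)
        |>.aestronglyMeasurable)
      (fun n => .of_forall fun s hs => ?_) (.of_forall fun _ _ => summable_pow_div_factorial |z|)
      intervalIntegrable_const (.of_forall fun s _ => ?_)
    · have hs' : s ∈ uIcc (-1 : ℝ) 1 := uIoc_subset_uIcc hs
      have hw := one_sub_sq_nonneg_of_mem_uIcc hs'
      rw [uIcc_of_le (by norm_num)] at hs'
      have habs : |s| ≤ 1 := abs_le.2 hs'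
      rw [norm_mul, norm_div, norm_pow, norm_mul, Real.norm_of_nonneg (rpow_nonneg hw p),
        Real.norm_natCast, Real.norm_eq_abs, Real.norm_eq_abs]
      calc (|z| * |s|) ^ n / n ! * (1 - s ^ 2) ^ p ≤ (|z| * 1) ^ n / n ! * 1 := by
            gcongr
            exact rpow_le_one hw (by nlinarith) hp
        _ = |z| ^ n / n ! := by ring
    · rw [exp_eq_exp_ℝ]
      exact (NormedSpace.expSeries_div_hasSum_exp (z * s)).mul_right _
  have hterm : ∀ n, ∫ s in (-1 : ℝ)..1, (z * s) ^ n / n ! * (1 - s ^ 2) ^ p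
      = z ^ n / n ! * ∫ s in (-1 : ℝ)..1, s ^ n * (1 - s ^ 2) ^ p := fun n => by
    rw [← integral_const_mul]
    congr 1 with s
    ring
  simp only [hterm] at hexp
  rw [← (mul_right_injective₀ two_ne_zero).hasSum_iff] at hexp
  · exact hexp
  intro n hn
  have hodd : Odd n := Nat.not_even_iff_odd.1 fun ⟨k, hk⟩ => hn ⟨k, by simp only; omega⟩
  simp [integral_odd_pow_mul_one_sub_sq_rpow p hodd]

lemma poissonIntegral_pos {p : ℝ} (hp : 0 ≤ p) (z : ℝ) : 0 < poissonIntegral p z := by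
  refine intervalIntegral_pos_of_pos_on
    (((continuous_const.mul continuous_id).rexp.mul
      (continuous_one_sub_sq_rpow hp)).intervalIntegrable _ _)
    (fun s hs => ?_) (by norm_num)
  have : 0 < 1 - s ^ 2 := by nlinarith [hs.1, hs.2]
  positivity

lemma besselMoment_zero_pos {p : ℝ} (hp : 0 ≤ p) : 0 < besselMoment p 0 := by
  simpa [besselMoment, poissonIntegral] using poissonIntegral_pos hp 0

lemma besselI_eq_poissonIntegral {μ z : ℝ} (hμ : 1 / 2 ≤ μ) (hz : 0 < z) :
    besselI μ z = (z / 2) ^ μ / (besselMoment (μ - 1 / 2) 0 * Gamma (μ + 1))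
      * poissonIntegral (μ - 1 / 2) z := by
  have hp : 0 ≤ μ - 1 / 2 := by linarith
  have hC := (besselMoment_zero_pos hp).ne'
  rw [← ((hasSum_poissonIntegral hp z).mul_left _).tsum_eq, besselI]
  refine tsum_congr fun k => ?_
  have hΓ : (0 : ℝ) < Gamma (k + μ + 1) := Gamma_pos_of_pos (by positivity)
  have hmoment := besselMoment_mul_eq hp k
  rw [show (k : ℝ) + (μ - 1 / 2) + 3 / 2 = k + μ + 1 by ring,
    show μ - 1 / 2 + 3 / 2 = μ + 1 by ring] at hmoment
  rw [rpow_add (by positivity), show 2 * (k : ℝ) = (2 * k : ℕ) by push_cast; ring, rpow_natCast,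
    div_pow, show (2 : ℝ) ^ (2 * k) = 4 ^ k by rw [pow_mul]; norm_num]
  have hΓ₀ : (0 : ℝ) < Gamma (μ + 1) := Gamma_pos_of_pos (by linarith)
  generalize besselMoment (μ - 1 / 2) k = m at hmoment ⊢
  generalize besselMoment (μ - 1 / 2) 0 = m₀ at hmoment hC ⊢
  field_simp
  linear_combination -hmoment

noncomputable def shiftedPoissonIntegral (p z : ℝ) : ℝ :=
  ∫ u in (0 : ℝ)..2 * z, exp (-u) * (u * (2 * z - u)) ^ p

lemma shiftedPoissonIntegral_eq (p : ℝ) {z : ℝ} (hz : 0 < z) :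
    shiftedPoissonIntegral p z = z ^ (2 * p + 1) * exp (-z) * poissonIntegral p z := by
  have hsub := integral_comp_sub_mul (a := -1) (b := 1)
    (fun u => exp (-u) * (u * (2 * z - u)) ^ p) hz.ne' z
  rw [show z - z * 1 = 0 by ring, show z - z * -1 = 2 * z by ring, smul_eq_mul,
    ← shiftedPoissonIntegral, eq_inv_mul_iff_mul_eq₀ hz.ne'] at hsub
  rw [← hsub, poissonIntegral, ← integral_const_mul, ← integral_const_mul]
  refine integral_congr fun s hs => ?_
  have hz2 : z ^ (2 * p) = (z ^ 2) ^ p := by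
    rw [← rpow_natCast, ← rpow_mul hz.le]
    norm_num
  rw [show -(z - z * s) = z * s + -z by ring, exp_add, show (z - z * s) * (2 * z - (z - z * s))
    = z ^ 2 * (1 - s ^ 2) by ring, mul_rpow (sq_nonneg z) (one_sub_sq_nonneg_of_mem_uIcc hs),
    rpow_add hz, rpow_one, hz2]
  ring

lemma monotoneOn_shiftedPoissonIntegral {p : ℝ} (hp : 0 ≤ p) :
    MonotoneOn (shiftedPoissonIntegral p) (Ici 0) := by
  intro x hx y _ hxy
  have hcont : ∀ c : ℝ, Continuous fun u : ℝ => exp (-u) * (u * (c - u)) ^ p := fun c =>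
    continuous_neg.rexp.mul
      ((continuous_id.mul (continuous_const.sub continuous_id)).rpow_const fun _ => Or.inr hp)
  calc shiftedPoissonIntegral p x
      ≤ ∫ u in (0 : ℝ)..2 * x, exp (-u) * (u * (2 * y - u)) ^ p := by
        refine integral_mono_on (by simpa using hx) ((hcont _).intervalIntegrable _ _)
          ((hcont _).intervalIntegrable _ _) fun u hu => ?_
        gcongr
        · nlinarith [hu.1, hu.2]
        · exact hu.1
    _ ≤ shiftedPoissonIntegral p y := by
        refine integral_mono_interval le_rfl (by simpa using hx) (by linarith)
          (MeasureTheory.ae_restrict_of_forall_mem measurableSet_Ioc fun u hu => ?_)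
          ((hcont _).intervalIntegrable _ _)
        have : 0 ≤ u * (2 * y - u) := mul_nonneg hu.1.le (by linarith [hu.2])
        positivity

lemma besselMoment_zero_mul_Gamma_pos {μ : ℝ} (hμ : 1 / 2 ≤ μ) :
    0 < besselMoment (μ - 1 / 2) 0 * Gamma (μ + 1) :=
  mul_pos (besselMoment_zero_pos (by linarith)) (Gamma_pos_of_pos (by linarith))

lemma rpow_mul_exp_neg_mul_besselI {μ z : ℝ} (hμ : 1 / 2 ≤ μ) (hz : 0 < z) :
    z ^ μ * exp (-z) * besselI μ z = shiftedPoissonIntegral (μ - 1 / 2) z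
      / (2 ^ μ * (besselMoment (μ - 1 / 2) 0 * Gamma (μ + 1))) := by
  have hC := besselMoment_zero_mul_Gamma_pos hμ
  rw [besselI_eq_poissonIntegral hμ hz, shiftedPoissonIntegral_eq _ hz,
    show 2 * (μ - 1 / 2) + 1 = μ + μ by ring, rpow_add hz, div_rpow hz.le zero_le_two]
  field_simp

lemma monotoneOn_rpow_mul_exp_neg_mul_besselI {μ : ℝ} (hμ : 1 / 2 ≤ μ) :
    MonotoneOn (fun z => z ^ μ * exp (-z) * besselI μ z) (Ioi 0) := by
  intro x hx y hy hxy
  have hC := besselMoment_zero_mul_Gamma_pos hμ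
  simp only [rpow_mul_exp_neg_mul_besselI hμ hx, rpow_mul_exp_neg_mul_besselI hμ hy]
  gcongr
  exact monotoneOn_shiftedPoissonIntegral (by linarith) (Ioi_subset_Ici_self hx)
    (Ioi_subset_Ici_self hy) hxy

lemma besselI_pos {μ z : ℝ} (hμ : 1 / 2 ≤ μ) (hz : 0 < z) : 0 < besselI μ z := by
  have hC := besselMoment_zero_mul_Gamma_pos hμ
  rw [besselI_eq_poissonIntegral hμ hz]
  have := poissonIntegral_pos (by linarith : 0 ≤ μ - 1 / 2) z
  positivity

lemma rpow_div_mul_exp_sub_mul_besselI_le {μ x y : ℝ} (hμ : 1 / 2 ≤ μ) (hx : 0 < x)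
    (hxy : x ≤ y) :
    (x / y) ^ μ * exp (y - x) * besselI μ x ≤ besselI μ y := by
  have hy := hx.trans_le hxy
  have hmono := monotoneOn_rpow_mul_exp_neg_mul_besselI hμ hx hy hxy
  calc (x / y) ^ μ * exp (y - x) * besselI μ x
      = (x ^ μ * exp (-x) * besselI μ x) / (y ^ μ * exp (-y)) := by
        rw [div_rpow hx.le hy.le, exp_sub, exp_neg, exp_neg]
        field_simp
    _ ≤ (y ^ μ * exp (-y) * besselI μ y) / (y ^ μ * exp (-y)) := by gcongr
    _ = besselI μ y := by field_simp

theorem besselI_ratio_lower (μ : ℝ) (hμ : 1/2 ≤ μ) :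
    (∀ x y : ℝ, 0 < x → x ≤ y →
      (x / y) ^ μ * Real.exp (y - x) ≤ besselI μ y / besselI μ x) ∧
    (∀ z : ℝ, 1 ≤ z → besselI μ 1 * z ^ (-μ) * Real.exp (z - 1) ≤ besselI μ z) := by
  refine ⟨fun x y hx hxy =>
    (le_div_iff₀ (besselI_pos hμ hx)).2 (rpow_div_mul_exp_sub_mul_besselI_le hμ hx hxy),
    fun z hz => ?_⟩
  calc besselI μ 1 * z ^ (-μ) * exp (z - 1)
      = (1 / z) ^ μ * exp (z - 1) * besselI μ 1 := by
        rw [one_div, inv_rpow (by linarith), rpow_neg (by linarith)]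
        ring
    _ ≤ besselI μ z := rpow_div_mul_exp_sub_mul_besselI_le hμ one_pos hz
end
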